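/- arXiv:2212.11744 — 5 statements merged into one kernel-verified Lean document; each statement's English description precedes it below -/
import Mathlib

section
/- Define V(y,s;z,t) : ℝ × ℝ × ℝ × ℝ → EReal by V(y,s;z,t) = 0 if (y > 0 and y ≤ z ∧ z ≤ exp(t-s)·y) or (y ≤ 0 and exp(t-s)·y ≤ z ∧ z ≤ y), and V(y,s;z,t) = ∞ otherwise. Then for all s ≤ u ≤ t and all y, z: V(y,s;z,t) = inf over w of (V(y,s;w,u) + V(w,u;z,t)). -/
open Classical

/-- Conditional value function (reachable-set indicator) for `dx/dt = u x`,
`u ∈ [0,1]`. -/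
noncomputable def Vcond (y s z t : ℝ) : EReal :=
  if (y > 0 ∧ y ≤ z ∧ z ≤ Real.exp (t - s) * y) ∨
     (y ≤ 0 ∧ Real.exp (t - s) * y ≤ z ∧ z ≤ y) then 0 else ⊤

/-- The reachable-set indicator satisfies the min-plus combination rule. -/
theorem Vcond_comb (s u t : ℝ) (hsu : s ≤ u) (hut : u ≤ t) (y z : ℝ) :
    Vcond y s z t = ⨅ w, Vcond y s w u + Vcond w u z t := by
  have hexp : Real.exp (t - s) = Real.exp (t - u) * Real.exp (u - s) := by
    rw [← Real.exp_add]; ring_nf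
  have h1 : (1:ℝ) ≤ Real.exp (u - s) := Real.one_le_exp (by linarith)
  have h2 : (1:ℝ) ≤ Real.exp (t - u) := Real.one_le_exp (by linarith)
  have he1 : (0:ℝ) < Real.exp (u - s) := Real.exp_pos _
  have he2 : (0:ℝ) < Real.exp (t - u) := Real.exp_pos _
  by_cases hP : (y > 0 ∧ y ≤ z ∧ z ≤ Real.exp (t - s) * y) ∨
     (y ≤ 0 ∧ Real.exp (t - s) * y ≤ z ∧ z ≤ y)
  · rw [Vcond, if_pos hP]
    refine le_antisymm (le_iInf fun w => ?_) ?_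
    · unfold Vcond
      split <;> split <;> simp
    · obtain ⟨hy, hyz, hz⟩ | ⟨hy, hz, hzy⟩ := hP
      · refine iInf_le_of_le (min z (Real.exp (u - s) * y)) ?_
        have hw1 : Vcond y s (min z (Real.exp (u - s) * y)) u = 0 := by
          rw [Vcond, if_pos]; left
          exact ⟨hy, le_min hyz (by nlinarith), min_le_right _ _⟩
        have hw2 : Vcond (min z (Real.exp (u - s) * y)) u z t = 0 := by
          rw [Vcond, if_pos]; left
          have hwpos : 0 < min z (Real.exp (u - s) * y) :=
            lt_of_lt_of_le hy (le_min hyz (by nlinarith))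
          refine ⟨hwpos, min_le_left _ _, ?_⟩
          rcases min_cases z (Real.exp (u - s) * y) with ⟨h, _⟩ | ⟨h, _⟩
          · rw [h]; nlinarith
          · rw [h]; nlinarith
        rw [hw1, hw2]; simp
      · refine iInf_le_of_le (max z (Real.exp (u - s) * y)) ?_
        have hw1 : Vcond y s (max z (Real.exp (u - s) * y)) u = 0 := by
          rw [Vcond, if_pos]; right
          exact ⟨hy, le_max_right _ _, max_le hzy (by nlinarith)⟩
        have hw2 : Vcond (max z (Real.exp (u - s) * y)) u z t = 0 := by
          rw [Vcond, if_pos]; right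
          have hwnp : max z (Real.exp (u - s) * y) ≤ 0 :=
            le_trans (max_le hzy (by nlinarith)) hy
          refine ⟨hwnp, ?_, le_max_left _ _⟩
          rcases max_cases z (Real.exp (u - s) * y) with ⟨h, _⟩ | ⟨h, _⟩
          · rw [h]; nlinarith
          · rw [h]; nlinarith
        rw [hw1, hw2]; simp
  · rw [Vcond, if_neg hP]
    refine le_antisymm (le_iInf fun w => ?_) le_top
    unfold Vcond
    split
    · rename_i hQ1
      split
      · rename_i hQ2
        exfalso; apply hP
        obtain ⟨hy, hyw, hw⟩ | ⟨hy, hw, hwy⟩ := hQ1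
        · obtain ⟨hw', hwz, hz⟩ | ⟨hw', _, _⟩ := hQ2
          · left; exact ⟨hy, le_trans hyw hwz, by nlinarith⟩
          · exfalso; nlinarith
        · obtain ⟨hw', hwz, _⟩ | ⟨hw', hz, hzw⟩ := hQ2
          · exfalso; nlinarith
          · right; exact ⟨hy, by nlinarith, le_trans hzw hwy⟩
      · simp
    · split <;> simp
end

section
/- The function A(s,τ) = √2 exp(-√2(s - τ)) (tanh(√2(s - τ)) + 1) / (tanh(√2(s - τ)) + √2) satisfies ∂A/∂s = A·J - A, where J(s,τ) = √2/(tanh(√2(s-τ)) + √2) - 1, with boundary condition A(τ,τ) = 1. -/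
noncomputable def Afun (s τ : ℝ) : ℝ :=
  Real.sqrt 2 * Real.exp (-(Real.sqrt 2 * (s - τ)))
    * (Real.tanh (Real.sqrt 2 * (s - τ)) + 1)
    / (Real.tanh (Real.sqrt 2 * (s - τ)) + Real.sqrt 2)

noncomputable def Jfun (s τ : ℝ) : ℝ :=
  Real.sqrt 2 / (Real.tanh (Real.sqrt 2 * (s - τ)) + Real.sqrt 2) - 1

lemma hasDerivAt_tanh (x : ℝ) :
    HasDerivAt Real.tanh (1 - Real.tanh x ^ 2) x := by
  have hc : Real.cosh x ≠ 0 := (Real.cosh_pos x).ne'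
  have h := (Real.hasDerivAt_sinh x).div (Real.hasDerivAt_cosh x) hc
  have hfun : Real.tanh = fun y => Real.sinh y / Real.cosh y :=
    funext Real.tanh_eq_sinh_div_cosh
  rw [hfun]
  refine h.congr_deriv ?_
  have h2 : Real.cosh x ^ 2 - Real.sinh x ^ 2 = 1 := Real.cosh_sq_sub_sinh_sq x
  show _ = 1 - (Real.sinh x / Real.cosh x) ^ 2
  field_simp

lemma abs_tanh_lt_one (x : ℝ) : |Real.tanh x| < 1 := by
  have hc : 0 < Real.cosh x := Real.cosh_pos x
  rw [Real.tanh_eq_sinh_div_cosh, abs_div, abs_of_pos hc, div_lt_one hc, abs_lt]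
  constructor
  · nlinarith [Real.exp_pos x, Real.cosh_add_sinh x]
  · nlinarith [Real.exp_pos (-x), Real.cosh_sub_sinh x]

/-- The closed-form `A(s,τ)` satisfies `∂A/∂s = A J - A` with boundary
condition `A(τ,τ) = 1`. -/
theorem Afun_backward_ode (τ : ℝ) :
    Afun τ τ = 1 ∧
    ∀ s : ℝ,
      HasDerivAt (fun s' => Afun s' τ) (Afun s τ * Jfun s τ - Afun s τ) s := by
  have s2 : Real.sqrt 2 ^ 2 = 2 := Real.sq_sqrt (by norm_num)
  have hs2pos : (0:ℝ) < Real.sqrt 2 := Real.sqrt_pos.2 (by norm_num)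
  have hs2gt1 : (1:ℝ) < Real.sqrt 2 := by nlinarith
  constructor
  · simp [Afun, Real.tanh_zero]
  · intro s
    set t : ℝ := Real.sqrt 2 * (s - τ) with ht
    have hden : Real.tanh t + Real.sqrt 2 ≠ 0 := by
      have := (abs_lt.1 (abs_tanh_lt_one t)).1
      nlinarith
    have hT : HasDerivAt (fun s' : ℝ => Real.sqrt 2 * (s' - τ)) (Real.sqrt 2) s := by
      simpa using ((hasDerivAt_id s).sub_const τ).const_mul (Real.sqrt 2)
    have htanh : HasDerivAt (fun s' : ℝ => Real.tanh (Real.sqrt 2 * (s' - τ)))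
        ((1 - Real.tanh t ^ 2) * Real.sqrt 2) s :=
      by have := (hasDerivAt_tanh t).comp s hT; exact this
    have hexp : HasDerivAt (fun s' : ℝ => Real.exp (-(Real.sqrt 2 * (s' - τ))))
        (Real.exp (-t) * (-Real.sqrt 2)) s := by
      have := (hT.neg).exp
      simpa [ht] using this
    have hnum : HasDerivAt (fun s' : ℝ =>
        Real.sqrt 2 * Real.exp (-(Real.sqrt 2 * (s' - τ)))
          * (Real.tanh (Real.sqrt 2 * (s' - τ)) + 1))
        ((Real.sqrt 2 * (Real.exp (-t) * (-Real.sqrt 2))) * (Real.tanh t + 1)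
          + (Real.sqrt 2 * Real.exp (-t)) * ((1 - Real.tanh t ^ 2) * Real.sqrt 2)) s :=
      (hexp.const_mul (Real.sqrt 2)).mul (htanh.add_const 1)
    have hA : HasDerivAt (fun s' => Afun s' τ)
        ((((Real.sqrt 2 * (Real.exp (-t) * (-Real.sqrt 2))) * (Real.tanh t + 1)
          + (Real.sqrt 2 * Real.exp (-t)) * ((1 - Real.tanh t ^ 2) * Real.sqrt 2))
            * (Real.tanh t + Real.sqrt 2)
          - (Real.sqrt 2 * Real.exp (-t) * (Real.tanh t + 1))
            * ((1 - Real.tanh t ^ 2) * Real.sqrt 2))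
          / (Real.tanh t + Real.sqrt 2) ^ 2) s := by
      unfold Afun
      exact hnum.div (htanh.add_const (Real.sqrt 2)) hden
    convert hA using 1
    unfold Afun Jfun
    rw [← ht]
    set a := Real.tanh t
    set e := Real.exp (-t)
    field_simp
    ring_nf
    linear_combination (e * (Real.sqrt 2 ^ 4 * a ^ 2 + Real.sqrt 2 ^ 4 * a
      + 3 * Real.sqrt 2 ^ 3 * a ^ 3 + 3 * Real.sqrt 2 ^ 3 * a ^ 2
      + 3 * Real.sqrt 2 ^ 2 * a ^ 4 + 3 * Real.sqrt 2 ^ 2 * a ^ 3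
      + Real.sqrt 2 * a ^ 5 + Real.sqrt 2 * a ^ 4
      + a * (1 - Real.sqrt 2 ^ 4)
      + a ^ 2 * (1 - Real.sqrt 2 ^ 4 - 3 * Real.sqrt 2 ^ 3)
      + a ^ 3 * (-3 * Real.sqrt 2 ^ 3 - 3 * Real.sqrt 2 ^ 2)
      + a ^ 4 * (-3 * Real.sqrt 2 ^ 2 - Real.sqrt 2)
      + a ^ 5 * (-Real.sqrt 2))) * s2
end

section
/- Let A(s,τ) = √2 e^{-√2(s-τ)}(tanh(√2(s-τ))+1)/(tanh(√2(s-τ))+√2) and C(s,τ) = J(s,τ) = √2/(tanh(√2(s-τ))+√2) - 1. Then for all s ≤ τ ≤ t the scalar combination rule holds: A(s,t) = A(τ,t)·A(s,τ)/(1 + C(s,τ)·J(τ,t)), C(s,t) = A(τ,t)²·C(s,τ)/(1 + C(s,τ)·J(τ,t)) + C(τ,t), and J(s,t) = A(s,τ)²·J(τ,t)/(1 + J(τ,t)·C(s,τ)) + J(s,τ). -/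
noncomputable def Cfun (s τ : ℝ) : ℝ :=
  Real.sqrt 2 / (Real.tanh (Real.sqrt 2 * (s - τ)) + Real.sqrt 2) - 1

lemma denom_pos (u : ℝ) : 0 < Real.sinh u + Real.sqrt 2 * Real.cosh u := by
  have h1 : 0 < Real.sinh u + Real.cosh u := by
    rw [Real.sinh_add_cosh]; exact Real.exp_pos u
  have h2 : (1:ℝ) ≤ Real.sqrt 2 := by
    nlinarith [Real.sq_sqrt (by norm_num : (2:ℝ) ≥ 0), Real.sqrt_nonneg 2]
  nlinarith [Real.cosh_pos u]

lemma tanh_denom_ne (u : ℝ) : Real.tanh u + Real.sqrt 2 ≠ 0 := by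
  have h := denom_pos u
  have hc := Real.cosh_pos u
  rw [Real.tanh_eq_sinh_div_cosh]
  intro h0
  have : Real.sinh u + Real.sqrt 2 * Real.cosh u = 0 := by
    field_simp at h0
    linarith
  linarith

lemma Afun_eq (s τ : ℝ) : Afun s τ
    = Real.sqrt 2 / (Real.sinh (Real.sqrt 2 * (s - τ)) + Real.sqrt 2 * Real.cosh (Real.sqrt 2 * (s - τ))) := by
  have key : ∀ u : ℝ, Real.sqrt 2 * Real.exp (-u) * (Real.tanh u + 1) / (Real.tanh u + Real.sqrt 2)
      = Real.sqrt 2 / (Real.sinh u + Real.sqrt 2 * Real.cosh u) := by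
    intro u
    have hc := Real.cosh_pos u
    have hd := denom_pos u
    have ht := tanh_denom_ne u
    have he : Real.exp (-u) = Real.cosh u - Real.sinh u := (Real.cosh_sub_sinh u).symm
    have hsq := Real.cosh_sq_sub_sinh_sq u
    rw [Real.tanh_eq_sinh_div_cosh] at *
    rw [he]
    field_simp
    linear_combination hsq
  exact key _

lemma Cfun_eq (s τ : ℝ) : Cfun s τ
    = -Real.sinh (Real.sqrt 2 * (s - τ)) / (Real.sinh (Real.sqrt 2 * (s - τ)) + Real.sqrt 2 * Real.cosh (Real.sqrt 2 * (s - τ))) := by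
  have hc := Real.cosh_pos (Real.sqrt 2 * (s - τ))
  have hd := denom_pos (Real.sqrt 2 * (s - τ))
  have ht := tanh_denom_ne (Real.sqrt 2 * (s - τ))
  rw [Cfun, Real.tanh_eq_sinh_div_cosh] at *
  field_simp
  ring

lemma Jfun_eq (s τ : ℝ) : Jfun s τ
    = -Real.sinh (Real.sqrt 2 * (s - τ)) / (Real.sinh (Real.sqrt 2 * (s - τ)) + Real.sqrt 2 * Real.cosh (Real.sqrt 2 * (s - τ))) := Cfun_eq s τ

lemma core (r Su Cu Sv Cv : ℝ) (hr : r^2 = 2)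
    (hu : Cu^2 - Su^2 = 1) (hv : Cv^2 - Sv^2 = 1)
    (hdu : Su + r*Cu ≠ 0) (hdv : Sv + r*Cv ≠ 0)
    (hdw : (Su*Cv + Cu*Sv) + r*(Cu*Cv + Su*Sv) ≠ 0)
    (hD : (Su + r*Cu)*(Sv + r*Cv) + Su*Sv ≠ 0)
    (hD' : (Sv + r*Cv)*(Su + r*Cu) + Sv*Su ≠ 0) :
    (r / ((Su*Cv + Cu*Sv) + r*(Cu*Cv + Su*Sv))
      = (r/(Sv + r*Cv)) * (r/(Su + r*Cu)) / (1 + (-Su/(Su + r*Cu)) * (-Sv/(Sv + r*Cv)))) ∧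
    (-(Su*Cv + Cu*Sv) / ((Su*Cv + Cu*Sv) + r*(Cu*Cv + Su*Sv))
      = (r/(Sv + r*Cv))^2 * (-Su/(Su + r*Cu)) / (1 + (-Su/(Su + r*Cu)) * (-Sv/(Sv + r*Cv))) + (-Sv/(Sv + r*Cv))) ∧
    (-(Su*Cv + Cu*Sv) / ((Su*Cv + Cu*Sv) + r*(Cu*Cv + Su*Sv))
      = (r/(Su + r*Cu))^2 * (-Sv/(Sv + r*Cv)) / (1 + (-Sv/(Sv + r*Cv)) * (-Su/(Su + r*Cu))) + (-Su/(Su + r*Cu))) := by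
  have hr0 : r ≠ 0 := by rintro rfl; norm_num at hr
  have hK1 : 1 + (-Su/(Su + r*Cu)) * (-Sv/(Sv + r*Cv)) = r*((Su*Cv + Cu*Sv) + r*(Cu*Cv + Su*Sv))/((Su + r*Cu)*(Sv + r*Cv)) := by
    rw [eq_div_iff (mul_ne_zero hdu hdv)]
    field_simp
    linear_combination (-Su*Sv)*hr
  have hK2 : 1 + (-Sv/(Sv + r*Cv)) * (-Su/(Su + r*Cu)) = r*((Su*Cv + Cu*Sv) + r*(Cu*Cv + Su*Sv))/((Su + r*Cu)*(Sv + r*Cv)) := by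
    rw [← hK1]; ring
  have hdu2 : Su + Cu*r ≠ 0 := by rw [mul_comm]; exact hdu
  have hdv2 : Sv + Cv*r ≠ 0 := by rw [mul_comm]; exact hdv
  have hdw2 : Su*Cv + Cu*Sv + r*(Cv*Cu + Su*Sv) ≠ 0 := by rw [mul_comm Cv Cu]; exact hdw
  refine ⟨?_, ?_, ?_⟩
  · rw [hK1]
    field_simp
  · rw [hK1]
    field_simp
    linear_combination (-r*Su) * hv
  · rw [hK2]
    field_simp
    linear_combination (-r*Sv) * hu

/-- The closed-form scalar LQR conditional value function parameters satisfy
the associative combination rule. -/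
theorem scalar_comb_rule (s τ t : ℝ) (hsτ : s ≤ τ) (hτt : τ ≤ t) :
    Afun s t = Afun τ t * Afun s τ / (1 + Cfun s τ * Jfun τ t) ∧
    Cfun s t = (Afun τ t) ^ 2 * Cfun s τ / (1 + Cfun s τ * Jfun τ t) + Cfun τ t ∧
    Jfun s t = (Afun s τ) ^ 2 * Jfun τ t / (1 + Jfun τ t * Cfun s τ) + Jfun s τ := by
  set r := Real.sqrt 2 with hrdef
  have hr : r ^ 2 = 2 := Real.sq_sqrt (by norm_num)
  have hr0 : 0 ≤ r := Real.sqrt_nonneg 2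
  set u := r * (s - τ) with hudef
  set v := r * (τ - t) with hvdef
  have hw : r * (s - t) = u + v := by rw [hudef, hvdef]; ring
  set Su := Real.sinh u with hSu
  set Cu := Real.cosh u with hCu
  set Sv := Real.sinh v with hSv
  set Cv := Real.cosh v with hCv
  have hu : Cu ^ 2 - Su ^ 2 = 1 := Real.cosh_sq_sub_sinh_sq u
  have hv : Cv ^ 2 - Sv ^ 2 = 1 := Real.cosh_sq_sub_sinh_sq v
  have hdu' : 0 < Su + r * Cu := denom_pos u
  have hdv' : 0 < Sv + r * Cv := denom_pos v
  have hdw' : 0 < Real.sinh (u + v) + r * Real.cosh (u + v) := denom_pos (u + v)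
  rw [Real.sinh_add, Real.cosh_add] at hdw'
  have hSu0 : Su ≤ 0 := by
    rw [hSu]
    have : u ≤ 0 := by
      rw [hudef]
      exact mul_nonpos_of_nonneg_of_nonpos hr0 (by linarith)
    calc Real.sinh u ≤ Real.sinh 0 := Real.sinh_le_sinh.mpr this
      _ = 0 := Real.sinh_zero
  have hSv0 : Sv ≤ 0 := by
    rw [hSv]
    have : v ≤ 0 := by
      rw [hvdef]
      exact mul_nonpos_of_nonneg_of_nonpos hr0 (by linarith)
    calc Real.sinh v ≤ Real.sinh 0 := Real.sinh_le_sinh.mpr this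
      _ = 0 := Real.sinh_zero
  have hDpos : 0 < (Su + r * Cu) * (Sv + r * Cv) + Su * Sv := by
    have : 0 ≤ Su * Sv := by nlinarith
    nlinarith
  have h := core r Su Cu Sv Cv hr hu hv (ne_of_gt hdu') (ne_of_gt hdv')
    (ne_of_gt hdw') (ne_of_gt hDpos) (by intro h0; apply ne_of_gt hDpos; linarith [h0]; )
  rw [Afun_eq s t, Afun_eq τ t, Afun_eq s τ, Cfun_eq s t, Cfun_eq s τ, Cfun_eq τ t,
    Jfun_eq s t, Jfun_eq τ t, Jfun_eq s τ, ← hudef, ← hvdef, hw, Real.sinh_add, Real.cosh_add,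
    ← hSu, ← hCu, ← hSv, ← hCv]
  exact h
end

section
/- Let J(t,t_f) = √2/(tanh(√2(t-t_f))+√2) - 1, A(t,t_f) = √2 e^{-√2(t-t_f)}(tanh(√2(t-t_f))+1)/(tanh(√2(t-t_f))+√2), C(t,t_f) = J(t,t_f), and let S_f satisfy 0 < S_f < 1+√2. Then A(t,t_f)²·S_f/(1 + S_f·C(t,t_f)) + J(t,t_f) = (S_f(√2 - tanh(√2(t-t_f))) - tanh(√2(t-t_f)))/(√2 + (1-S_f)·tanh(√2(t-t_f))) for all t ≤ t_f. -/
/-- Combining the closed-form conditional value function with the terminal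
coefficient `S_f` recovers the Riccati solution `S(t)`. -/
theorem combine_terminal_recovers_S (Sf tf : ℝ) (h0 : 0 < Sf)
    (h1 : Sf < 1 + Real.sqrt 2) (t : ℝ) (ht : t ≤ tf) :
    (Afun t tf) ^ 2 * Sf / (1 + Sf * Cfun t tf) + Jfun t tf
      = (Sf * (Real.sqrt 2 - Real.tanh (Real.sqrt 2 * (t - tf)))
          - Real.tanh (Real.sqrt 2 * (t - tf)))
        / (Real.sqrt 2 + (1 - Sf) * Real.tanh (Real.sqrt 2 * (t - tf))) := by
  have hs2 : (1:ℝ) < Real.sqrt 2 := by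
    nlinarith [Real.sq_sqrt (by norm_num : (0:ℝ) ≤ 2), Real.sqrt_nonneg 2]
  have hssq : Real.sqrt 2 ^ 2 = 2 := Real.sq_sqrt (by norm_num)
  simp only [Afun, Cfun, Jfun]
  set θ := Real.sqrt 2 * (t - tf) with hθ
  have hθle : θ ≤ 0 := mul_nonpos_of_nonneg_of_nonpos (Real.sqrt_nonneg 2) (by linarith)
  have hcosh : (0:ℝ) < Real.cosh θ := Real.cosh_pos θ
  have hsinh : Real.sinh θ ≤ 0 := Real.sinh_nonpos_iff.mpr hθle
  set T := Real.tanh θ with hTdef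
  have hsc : Real.sinh θ = T * Real.cosh θ := by
    rw [hTdef, Real.tanh_eq_sinh_div_cosh]; field_simp
  have hT0 : T ≤ 0 := by
    rw [hTdef, Real.tanh_eq_sinh_div_cosh]
    exact div_nonpos_of_nonpos_of_nonneg hsinh hcosh.le
  have hT1 : -1 < T := by
    have hexp : (0:ℝ) < Real.exp θ := Real.exp_pos θ
    rw [← Real.sinh_add_cosh] at hexp
    nlinarith [hsc]
  have hcs := Real.cosh_sq_sub_sinh_sq θ
  have hAc : Real.exp (-θ) * (T + 1) * Real.cosh θ = 1 := by
    rw [hTdef, Real.tanh_eq_sinh_div_cosh]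
    have h := Real.sinh_add_cosh θ
    field_simp
    rw [h, ← Real.exp_add]
    simp
  have h1T : Real.exp (-θ) ^ 2 * (T + 1) ^ 2 = 1 - T ^ 2 := by
    have key : (Real.exp (-θ) ^ 2 * (T + 1) ^ 2) * Real.cosh θ ^ 2
        = (1 - T ^ 2) * Real.cosh θ ^ 2 := by
      nlinarith [hAc, hcs, hsc]
    exact mul_right_cancel₀ (pow_ne_zero 2 hcosh.ne') key
  have hd1 : 0 < T + Real.sqrt 2 := by linarith
  have hd2 : 0 < Real.sqrt 2 + (1 - Sf) * T := by
    rcases le_or_gt Sf 1 with h | h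
    · nlinarith
    · nlinarith
  have hd3 : 1 + Sf * (Real.sqrt 2 / (T + Real.sqrt 2) - 1)
      = (Real.sqrt 2 + (1 - Sf) * T) / (T + Real.sqrt 2) := by
    field_simp; ring
  have hA2 : (Real.sqrt 2 * Real.exp (-θ) * (T + 1) / (T + Real.sqrt 2)) ^ 2
      = 2 * (1 - T ^ 2) / (T + Real.sqrt 2) ^ 2 := by
    rw [div_pow]
    congr 1
    rw [mul_pow, mul_pow, hssq]
    linear_combination 2 * h1T
  rw [hd3, hA2]
  have hd2' : Real.sqrt 2 + T * (1 - Sf) ≠ 0 := by nlinarith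
  field_simp
  linear_combination (-Sf) * hssq
end

section
/- For functions V1, V2 : ℝⁿ × ℝⁿ → ℝ of the quadratic dual form V_i(x,z) = max over λ of [½xᵀJ_i x - xᵀη_i - ½λᵀC_i λ - λᵀ(z - A_i x - b_i)] (with C_i positive semidefinite, J_i symmetric), their min-plus combination inf_z(V1(x,z) + V2(z,y)) is again of this form with parameters: A = A₂(I + C₁J₂)⁻¹A₁, b = A₂(I + C₁J₂)⁻¹(b₁ + C₁η₂) + b₂, C = A₂(I + C₁J₂)⁻¹C₁A₂ᵀ + C₂, η = A₁ᵀ(I + J₂C₁)⁻¹(η₂ - J₂b₁) + η₁, J = A₁ᵀ(I + J₂C₁)⁻¹J₂A₁ + J₁, assuming I + C₁J₂ is invertible. In the scalar case (n = 1) with C₁ > 0, J₂ ≥ 0, this combination identity holds with the explicit closed-form quadratics V_i(x,z) = ½J_i x² - η_i x + (z - A_i x - b_i)²/(2C_i). -/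
set_option maxHeartbeats 1000000

private lemma inf_quad (a m c : ℝ) (ha : 0 < a) :
    ⨅ z : ℝ, a * (z - m) ^ 2 + c = c := by
  have hb : BddBelow (Set.range fun z : ℝ => a * (z - m) ^ 2 + c) := by
    refine ⟨c, ?_⟩
    rintro w ⟨z, rfl⟩
    dsimp
    nlinarith [mul_nonneg ha.le (sq_nonneg (z - m))]
  apply le_antisymm
  · simpa using ciInf_le hb m
  · exact le_ciInf fun z => by nlinarith [mul_nonneg ha.le (sq_nonneg (z - m))]

/-- Scalar LQT combination rule (Lemma 1 in the scalar case): the min-plus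
combination of two quadratic conditional value functions in dual/closed form
is again of the same form, with the stated parameters, up to an additive
constant `κ` independent of `x` and `y`. -/
theorem scalar_lqt_combination
    (A₁ A₂ b₁ b₂ η₁ η₂ J₁ J₂ C₁ C₂ : ℝ)
    (hC₁ : 0 < C₁) (hC₂ : 0 < C₂) (hJ₂ : 0 ≤ J₂) :
    ∃ κ : ℝ, ∀ x y : ℝ,
      (⨅ z : ℝ,
          ((1 / 2) * J₁ * x ^ 2 - η₁ * x + (z - A₁ * x - b₁) ^ 2 / (2 * C₁)
            + ((1 / 2) * J₂ * z ^ 2 - η₂ * z + (y - A₂ * z - b₂) ^ 2 / (2 * C₂))))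
        = (1 / 2) * ((A₁ ^ 2 * J₂ / (1 + C₁ * J₂) + J₁)) * x ^ 2
          - (A₁ * (η₂ - J₂ * b₁) / (1 + J₂ * C₁) + η₁) * x
          + (y - (A₂ * A₁ / (1 + C₁ * J₂)) * x
              - (A₂ * (b₁ + C₁ * η₂) / (1 + C₁ * J₂) + b₂)) ^ 2
            / (2 * (A₂ ^ 2 * C₁ / (1 + C₁ * J₂) + C₂))
          + κ := by
  have hC₁' : C₁ ≠ 0 := hC₁.ne'
  have hC₂' : C₂ ≠ 0 := hC₂.ne'
  have hT : (0:ℝ) < 1 + C₁ * J₂ := by nlinarith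
  have hT' : (1:ℝ) + C₁ * J₂ ≠ 0 := hT.ne'
  have hT'' : (1:ℝ) + J₂ * C₁ ≠ 0 := by rw [mul_comm]; exact hT'
  have hS : (0:ℝ) < C₂ * (1 + C₁ * J₂) + A₂ ^ 2 * C₁ := by positivity
  have hS' : C₂ * (1 + C₁ * J₂) + A₂ ^ 2 * C₁ ≠ 0 := hS.ne'
  have ha : (0:ℝ) < (C₂ * (1 + C₁ * J₂) + A₂ ^ 2 * C₁) / (2 * (C₁ * C₂)) := by
    positivity
  refine ⟨b₁ ^ 2 / (2 * C₁) - (b₁ + C₁ * η₂) ^ 2 / (2 * C₁ * (1 + C₁ * J₂)),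
    fun x y => ?_⟩
  have key : ∀ z : ℝ,
      ((1 / 2) * J₁ * x ^ 2 - η₁ * x + (z - A₁ * x - b₁) ^ 2 / (2 * C₁)
        + ((1 / 2) * J₂ * z ^ 2 - η₂ * z + (y - A₂ * z - b₂) ^ 2 / (2 * C₂)))
      = (C₂ * (1 + C₁ * J₂) + A₂ ^ 2 * C₁) / (2 * (C₁ * C₂))
          * (z - (C₂ * (A₁ * x + b₁) + C₁ * C₂ * η₂ + C₁ * A₂ * (y - b₂))
              / (C₂ * (1 + C₁ * J₂) + A₂ ^ 2 * C₁)) ^ 2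
        + ((1 / 2) * J₁ * x ^ 2 - η₁ * x + (A₁ * x + b₁) ^ 2 / (2 * C₁)
            + (y - b₂) ^ 2 / (2 * C₂)
            - (C₂ * (A₁ * x + b₁) + C₁ * C₂ * η₂ + C₁ * A₂ * (y - b₂)) ^ 2
              / (2 * (C₁ * C₂) * (C₂ * (1 + C₁ * J₂) + A₂ ^ 2 * C₁))) := by
    intro z
    field_simp
    ring
  rw [iInf_congr key, inf_quad _ _ _ ha]
  have hD : A₂ ^ 2 * C₁ / (1 + C₁ * J₂) + C₂
      = (C₂ * (1 + C₁ * J₂) + A₂ ^ 2 * C₁) / (1 + C₁ * J₂) := by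
    field_simp; ring
  rw [hD]
  field_simp
  ring
end
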